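/- Let N be a positive even integer and let B be an integer with 2 ≤ B ≤ N/2. Let w ∈ ℂ^N be a window and i an integer such that the DFT of w satisfies ŵ_{(i+t) mod N} = 0 for all t = 0, …, N − B − 1 and ŵ_{(i+N−B) mod N} ≠ 0. Let 0 < L < N be a separation parameter and let z ∈ ℂ^N be any analytic signal. Then N·|ŷ^w_{k0, 0}(z)| = |ẑ_{N/2}|·|ŵ_{(i+N−B) mod N}|, where k0 = (N/2 − (i + N − B)) mod N; consequently ẑ_{N/2} is real and there exists ε ∈ {1, −1} with ẑ_{N/2} = ε·N·|ŷ^w_{k0,0}(z)| / |ŵ_{(i+N−B) mod N}|, i.e., ẑ_{N/2} is determined up to a sign by this single STFT measurement. -/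

import Mathlib

open Complex

/-- Discrete Fourier transform of a signal indexed by `ZMod N`. -/
noncomputable def dft {N : ℕ} (z : ZMod N → ℂ) (k : ZMod N) : ℂ :=
  ∑ n ∈ Finset.range N, z n *
    Complex.exp (-2 * (Real.pi : ℂ) * Complex.I * (k.val : ℂ) * (n : ℂ) / N)

/-- Short-time Fourier transform measurement `ŷ^w_{k,m}(z)` with window `w` and
separation parameter `L`. -/
noncomputable def stft {N : ℕ} (w : ZMod N → ℂ) (L : ℤ) (z : ZMod N → ℂ) (k m : ℤ) : ℂ :=
  ∑ n ∈ Finset.range N, z n * w ((m * L - n : ℤ) : ZMod N) *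
    Complex.exp (-2 * (Real.pi : ℂ) * Complex.I * (k : ℂ) * (n : ℂ) / N)

/-- The DFT of the analytic signal associated with a real signal `x`. -/
noncomputable def analyticHat (N : ℕ) (x : ZMod N → ℝ) (k : ℕ) : ℂ :=
  if N % 2 = 0 then
    if k = 0 then dft (fun n => (x n : ℂ)) 0
    else if k ≤ N / 2 - 1 then 2 * dft (fun n => (x n : ℂ)) (k : ZMod N)
    else if k = N / 2 then dft (fun n => (x n : ℂ)) ((N / 2 : ℕ) : ZMod N)
    else 0
  else
    if k = 0 then dft (fun n => (x n : ℂ)) 0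
    else if k ≤ (N - 1) / 2 then 2 * dft (fun n => (x n : ℂ)) (k : ZMod N)
    else 0

/-- The analytic signal `A(x)` of a real signal `x`, obtained by inverse DFT. -/
noncomputable def analyticSignal {N : ℕ} (x : ZMod N → ℝ) : ZMod N → ℂ :=
  fun n => (1 / N : ℂ) * ∑ k ∈ Finset.range N, analyticHat N x k *
    Complex.exp (2 * (Real.pi : ℂ) * Complex.I * (k : ℂ) * (n.val : ℂ) / N)

/-- A signal `z ∈ ℂ^N` is analytic if `z = A(x)` for some real signal `x`. -/
def IsAnalytic {N : ℕ} (z : ZMod N → ℂ) : Prop := ∃ x : ZMod N → ℝ, z = analyticSignal x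
/-!
At `m = 0` the STFT is the DFT of `z · w(-·)`, so the convolution theorem gives
`N · ŷ_{k,0} = ∑_j ẑ_j ŵ_{j-k}`. An analytic signal has `ẑ_j = 0` for `j > N/2`, and for
`k = k₀` and `j < N/2` the index `j - k₀` runs inside the block `i, …, i + N - B - 1` on which
`ŵ` vanishes; only `j = N/2` survives, so `N · ŷ_{k₀,0} = ẑ_{N/2} ŵ_{i+N-B}`. Finally
`ẑ_{N/2} = x̂_{N/2}` is real: the DFT of a real signal satisfies `conj x̂_k = x̂_{-k}`, and
`-N/2 = N/2` in `ZMod N`.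
-/

open Finset
open scoped ZMod ComplexConjugate

lemma neg_natCast_half {N : ℕ} (hEven : N % 2 = 0) : -((N / 2 : ℕ) : ZMod N) = (N / 2 : ℕ) := by
  refine neg_eq_of_add_eq_zero_left ?_
  rw [← Nat.cast_add, show N / 2 + N / 2 = N by omega, ZMod.natCast_self]

section
variable {N : ℕ} [NeZero N]

lemma sum_range_eq_sum_val {M : Type*} [AddCommMonoid M] (g : ℕ → M) :
    ∑ n ∈ range N, g n = ∑ j : ZMod N, g j.val := by
  refine Finset.sum_nbij' (fun n => (n : ZMod N)) ZMod.val ?_ ?_ ?_ ?_ ?_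
  · simp
  · simp [ZMod.val_lt]
  · exact fun n hn => ZMod.val_natCast_of_lt (mem_range.1 hn)
  · exact fun j _ => ZMod.natCast_zmod_val j
  · intro n hn; rw [ZMod.val_natCast_of_lt (mem_range.1 hn)]

lemma exp_mul_eq_stdAddChar (a b : ℤ) :
    exp (2 * Real.pi * I * a * b / N) = ZMod.stdAddChar ((a : ZMod N) * (b : ZMod N)) := by
  rw [← Int.cast_mul, ZMod.stdAddChar_coe]
  push_cast
  ring_nf

lemma dft_eq_zmod_dft (z : ZMod N → ℂ) : dft z = 𝓕 z := by
  ext k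
  rw [dft, ZMod.dft_apply, sum_range_eq_sum_val]
  refine sum_congr rfl fun j _ => ?_
  rw [show -2 * (Real.pi : ℂ) * I * (k.val : ℂ) * ((j.val : ℕ) : ℂ) / N
      = 2 * Real.pi * I * ((-(k.val : ℤ) : ℤ) : ℂ) * ((j.val : ℤ) : ℂ) / N by push_cast; ring,
    exp_mul_eq_stdAddChar]
  simp [mul_comm]

lemma stft_zero_eq_dft (w : ZMod N → ℂ) (L : ℤ) (z : ZMod N → ℂ) (k : ℤ) :
    stft w L z k 0 = 𝓕 (z * fun n => w (-n)) k := by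
  rw [stft, ZMod.dft_apply, sum_range_eq_sum_val]
  refine sum_congr rfl fun j _ => ?_
  rw [show -2 * (Real.pi : ℂ) * I * (k : ℂ) * ((j.val : ℕ) : ℂ) / N
      = 2 * Real.pi * I * ((-k : ℤ) : ℂ) * ((j.val : ℤ) : ℂ) / N by push_cast; ring,
    exp_mul_eq_stdAddChar]
  simp [mul_comm]

theorem ZMod.dft_mul (Φ Ψ : ZMod N → ℂ) (k : ZMod N) :
    𝓕 (Φ * Ψ) k = (N : ℂ)⁻¹ * ∑ j, 𝓕 Φ j * 𝓕 Ψ (k - j) := by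
  have hΦ : ∀ n, Φ n = (N : ℂ)⁻¹ * ∑ j, ZMod.stdAddChar (j * n) * 𝓕 Φ j := fun n => by
    conv_lhs => rw [← (𝓕 : (ZMod N → ℂ) ≃ₗ[ℂ] _).symm_apply_apply Φ]
    simp only [ZMod.invDFT_apply, smul_eq_mul]
  have hchar : ∀ j n : ZMod N, ZMod.stdAddChar (-(n * (k - j))) =
      ZMod.stdAddChar (-(n * k)) * ZMod.stdAddChar (j * n) := fun j n => by
    rw [← AddChar.map_add_eq_mul]; congr 1; ring
  rw [ZMod.dft_apply (Φ * Ψ)]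
  simp only [ZMod.dft_apply Ψ, Pi.mul_apply, hΦ, mul_sum, sum_mul, smul_eq_mul]
  rw [sum_comm]
  refine sum_congr rfl fun j _ => sum_congr rfl fun n _ => ?_
  rw [hchar j n]; ring

lemma mul_stft_zero_eq_sum (w : ZMod N → ℂ) (L : ℤ) (z : ZMod N → ℂ) (k : ℤ) :
    (N : ℂ) * stft w L z k 0 = ∑ j, dft z j * dft w (j - k) := by
  have hN : (N : ℂ) ≠ 0 := NeZero.ne _
  simp only [stft_zero_eq_dft, ZMod.dft_mul, ZMod.dft_comp_neg, neg_sub, dft_eq_zmod_dft,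
    mul_inv_cancel_left₀ hN]

lemma mul_stft_zero_eq_of_spectra {w z : ZMod N → ℂ} (L k : ℤ)
    (hz : ∀ j : ZMod N, N / 2 < j.val → dft z j = 0)
    (hw : ∀ j : ZMod N, j.val < N / 2 → dft w (j - k) = 0) :
    (N : ℂ) * stft w L z k 0 = dft z (N / 2 : ℕ) * dft w ((N / 2 : ℕ) - k) := by
  rw [mul_stft_zero_eq_sum, sum_eq_single ((N / 2 : ℕ) : ZMod N) _ (by simp)]
  intro j _ hj
  have hval : j.val ≠ N / 2 := fun h => hj (by rw [← h, ZMod.natCast_zmod_val])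
  rcases hval.lt_or_gt with hlt | hgt
  · rw [hw j hlt, mul_zero]
  · rw [hz j hgt, zero_mul]

lemma analyticSignal_eq_invDFT (x : ZMod N → ℝ) :
    analyticSignal x = 𝓕⁻ fun j => analyticHat N x j.val := by
  ext n
  rw [analyticSignal, ZMod.invDFT_apply, sum_range_eq_sum_val, one_div, smul_eq_mul]
  congr 1
  refine sum_congr rfl fun j _ => ?_
  rw [show 2 * (Real.pi : ℂ) * I * ((j.val : ℕ) : ℂ) * (n.val : ℂ) / N
      = 2 * Real.pi * I * ((j.val : ℤ) : ℂ) * ((n.val : ℤ) : ℂ) / N by push_cast; ring,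
    exp_mul_eq_stdAddChar]
  simp [mul_comm]

lemma dft_analyticSignal (x : ZMod N → ℝ) (k : ZMod N) :
    dft (analyticSignal x) k = analyticHat N x k.val := by
  rw [dft_eq_zmod_dft, analyticSignal_eq_invDFT, LinearEquiv.apply_symm_apply]

lemma conj_dft_ofReal (x : ZMod N → ℝ) (k : ZMod N) :
    conj (dft (fun n => (x n : ℂ)) k) = dft (fun n => (x n : ℂ)) (-k) := by
  simp only [dft_eq_zmod_dft, ZMod.dft_apply, map_sum, smul_eq_mul, map_mul, conj_ofReal,
    ← AddChar.map_neg_eq_conj, mul_neg, neg_neg]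

lemma im_dft_ofReal_half (hEven : N % 2 = 0) (x : ZMod N → ℝ) :
    (dft (fun n => (x n : ℂ)) (N / 2 : ℕ)).im = 0 :=
  conj_eq_iff_im.1 (by rw [conj_dft_ofReal, neg_natCast_half hEven])

lemma dft_analyticSignal_of_half_lt (hEven : N % 2 = 0) (x : ZMod N → ℝ) {j : ZMod N}
    (hj : N / 2 < j.val) :
    dft (analyticSignal x) j = 0 := by
  rw [dft_analyticSignal, analyticHat, if_pos hEven, if_neg (by omega), if_neg (by omega),
    if_neg (by omega)]

lemma dft_analyticSignal_half (hEven : N % 2 = 0) (x : ZMod N → ℝ) :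
    dft (analyticSignal x) (N / 2 : ℕ) = dft (fun n => (x n : ℂ)) (N / 2 : ℕ) := by
  have hN : N ≠ 0 := NeZero.ne N
  rw [dft_analyticSignal, ZMod.val_natCast_of_lt (by omega), analyticHat, if_pos hEven,
    if_neg (by omega), if_neg (by omega), if_pos rfl]

lemma dft_window_eq_zero (hEven : N % 2 = 0) {B : ℕ} (hBle : B ≤ N / 2) {w : ZMod N → ℂ}
    {i : ℤ}
    (hzero : ∀ t : ℕ, (t : ℤ) ≤ (N : ℤ) - B - 1 → dft w ((i + t : ℤ) : ZMod N) = 0)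
    {j : ZMod N} (hj : j.val < N / 2) :
    dft w (j - ((((N / 2 : ℕ) : ℤ) - (i + N - B) : ℤ) : ZMod N)) = 0 := by
  have hshift : j - ((((N / 2 : ℕ) : ℤ) - (i + N - B) : ℤ) : ZMod N)
      = ((i + (j.val + N / 2 - B : ℕ) : ℤ) : ZMod N) := by
    conv_lhs => rw [← ZMod.natCast_zmod_val j, ← Int.cast_natCast, ← Int.cast_sub]
    congr 1
    omega
  rw [hshift, hzero _ (by omega)]

end

lemma Complex.exists_sign_eq_of_im_eq_zero {c : ℂ} (hc : c.im = 0) :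
    ∃ ε : ℝ, (ε = 1 ∨ ε = -1) ∧ c = ((ε * ‖c‖ : ℝ) : ℂ) := by
  have hc' : c = (c.re : ℂ) := Complex.ext rfl (by simp [hc])
  rw [hc', norm_real, Real.norm_eq_abs]
  rcases abs_choice c.re with h | h
  · exact ⟨1, Or.inl rfl, by rw [h, one_mul]⟩
  · exact ⟨-1, Or.inr rfl, by rw [h, neg_one_mul, neg_neg]⟩

theorem recover_top_component_even_general (N : ℕ) (hN : 0 < N) (hEven : N % 2 = 0)
    (B : ℕ) (hBle : B ≤ N / 2)
    (w : ZMod N → ℂ) (i : ℤ)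
    (hzero : ∀ t : ℕ, (t : ℤ) ≤ (N : ℤ) - B - 1 → dft w ((i + t : ℤ) : ZMod N) = 0)
    (hwB : dft w ((i + N - B : ℤ) : ZMod N) ≠ 0)
    (L : ℤ)
    (z : ZMod N → ℂ) (hz : IsAnalytic z) :
    (N : ℝ) * ‖stft w L z (((N / 2 : ℕ) : ℤ) - (i + N - B)) 0‖ =
      ‖dft z ((N / 2 : ℕ) : ZMod N)‖ *
        ‖dft w ((i + N - B : ℤ) : ZMod N)‖ ∧
    (dft z ((N / 2 : ℕ) : ZMod N)).im = 0 ∧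
    ∃ ε : ℝ, (ε = 1 ∨ ε = -1) ∧
      dft z ((N / 2 : ℕ) : ZMod N) =
        ((ε * N * ‖stft w L z (((N / 2 : ℕ) : ℤ) - (i + N - B)) 0‖ /
          ‖dft w ((i + N - B : ℤ) : ZMod N)‖ : ℝ) : ℂ) := by
  obtain ⟨x, rfl⟩ := hz
  have : NeZero N := ⟨hN.ne'⟩
  have hkey : (N : ℂ) * stft w L (analyticSignal x) (((N / 2 : ℕ) : ℤ) - (i + N - B)) 0 =
      dft (analyticSignal x) ((N / 2 : ℕ) : ZMod N) * dft w ((i + N - B : ℤ) : ZMod N) := by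
    rw [mul_stft_zero_eq_of_spectra L _ (fun _ => dft_analyticSignal_of_half_lt hEven x)
      (fun _ => dft_window_eq_zero hEven hBle hzero), Int.cast_sub, Int.cast_natCast,
      sub_sub_cancel]
  have hnorm := congrArg norm hkey
  rw [norm_mul, norm_mul, Complex.norm_natCast] at hnorm
  have hreal : (dft (analyticSignal x) ((N / 2 : ℕ) : ZMod N)).im = 0 := by
    rw [dft_analyticSignal_half hEven]
    exact im_dft_ofReal_half hEven x
  obtain ⟨ε, hε, hsign⟩ := Complex.exists_sign_eq_of_im_eq_zero hreal
  refine ⟨hnorm, hreal, ε, hε, ?_⟩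
  rwa [mul_assoc, mul_div_assoc, hnorm, mul_div_cancel_right₀ _ (norm_ne_zero_iff.2 hwB)]

/-- for even `N`, the component `ẑ_{N/2}` of an analytic signal is
determined up to a sign by a single STFT measurement. -/
theorem recover_top_component_even (N : ℕ) (hN : 0 < N) (hEven : N % 2 = 0)
    (B : ℕ) (hB2 : 2 ≤ B) (hBle : B ≤ N / 2)
    (w : ZMod N → ℂ) (i : ℤ)
    (hzero : ∀ t : ℕ, (t : ℤ) ≤ (N : ℤ) - B - 1 → dft w ((i + t : ℤ) : ZMod N) = 0)
    (hwB : dft w ((i + N - B : ℤ) : ZMod N) ≠ 0)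
    (L : ℤ) (hL0 : 0 < L) (hLN : L < (N : ℤ))
    (z : ZMod N → ℂ) (hz : IsAnalytic z) :
    (N : ℝ) * ‖stft w L z (((N / 2 : ℕ) : ℤ) - (i + N - B)) 0‖ =
      ‖dft z ((N / 2 : ℕ) : ZMod N)‖ *
        ‖dft w ((i + N - B : ℤ) : ZMod N)‖ ∧
    (dft z ((N / 2 : ℕ) : ZMod N)).im = 0 ∧
    ∃ ε : ℝ, (ε = 1 ∨ ε = -1) ∧
      dft z ((N / 2 : ℕ) : ZMod N) =
        ((ε * N * ‖stft w L z (((N / 2 : ℕ) : ℤ) - (i + N - B)) 0‖ /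
          ‖dft w ((i + N - B : ℤ) : ZMod N)‖ : ℝ) : ℂ) :=
  recover_top_component_even_general N hN hEven B hBle w i hzero hwB L z hz
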